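/- Let 0<q₁<1 and 0<q₂<1, let β,δ>0, μ,ν>0 and η,ζ>−1 be real parameters, let f,g,h : [0,∞)→ℝ be continuous functions such that f and g are asynchronous on [0,∞) and h is nonnegative, and let u : [0,∞)→[0,∞) be continuous. Then the inequality of Theorem 1 is reversed; that is, for all t>0: I_{q₂}^{ζ,ν,δ}{u·f·g·h}(t)·I_{q₁}^{η,μ,β}{u}(t) + I_{q₂}^{ζ,ν,δ}{u·f·g}(t)·I_{q₁}^{η,μ,β}{u·h}(t) + I_{q₂}^{ζ,ν,δ}{u·h}(t)·I_{q₁}^{η,μ,β}{u·f·g}(t) + I_{q₂}^{ζ,ν,δ}{u}(t)·I_{q₁}^{η,μ,β}{u·f·g·h}(t) ≤ I_{q₂}^{ζ,ν,δ}{u·g·h}(t)·I_{q₁}^{η,μ,β}{u·f}(t) + I_{q₂}^{ζ,ν,δ}{u·f·h}(t)·I_{q₁}^{η,μ,β}{u·g}(t) + I_{q₂}^{ζ,ν,δ}{u·f}(t)·I_{q₁}^{η,μ,β}{u·g·h}(t) + I_{q₂}^{ζ,ν,δ}{u·g}(t)·I_{q₁}^{η,μ,β}{u·f·h}(t). -/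
import Mathlib


open scoped BigOperators

/-- The q-shifted factorial (a;q)_k = prod_{j<k} (1 - a q^j). -/
noncomputable def qPoch (q a : ℝ) (k : ℕ) : ℝ :=
  ∏ j ∈ Finset.range k, (1 - a * q ^ j)

/-- Generalized Erdélyi–Kober fractional q-integral
    I_q^{η,μ,β}{f}(t) = β(1-q^{1/β})(1-q)^{μ-1} ∑_k ((q^μ;q)_k/(q;q)_k) q^{k(η+1)} f(t q^{k/β}). -/
noncomputable def EK (q η μ β : ℝ) (f : ℝ → ℝ) (t : ℝ) : ℝ :=
  β * (1 - q ^ (1 / β)) * (1 - q) ^ (μ - 1) *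
    ∑' k : ℕ, qPoch q (q ^ μ) k / qPoch q q k * q ^ ((k : ℝ) * (η + 1)) * f (t * q ^ ((k : ℝ) / β))

def Synchronous (f g : ℝ → ℝ) : Prop :=
  ∀ x y : ℝ, 0 ≤ x → 0 ≤ y → 0 ≤ (f x - f y) * (g x - g y)

def Asynchronous (f g : ℝ → ℝ) : Prop :=
  ∀ x y : ℝ, 0 ≤ x → 0 ≤ y → (f x - f y) * (g x - g y) ≤ 0

open Filter Real

lemma qPoch_pos' {q a : ℝ} (hq0 : 0 ≤ q) (hq1 : q ≤ 1) (ha0 : 0 ≤ a) (ha1 : a < 1) (k : ℕ) :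
    0 < qPoch q a k := by
  apply Finset.prod_pos
  intro j _
  have h1 : q ^ j ≤ 1 := pow_le_one₀ hq0 hq1
  have h2 : 0 ≤ q ^ j := pow_nonneg hq0 j
  nlinarith

lemma qPoch_succ' (q a : ℝ) (k : ℕ) :
    qPoch q a (k + 1) = qPoch q a k * (1 - a * q ^ k) :=
  Finset.prod_range_succ _ _

lemma w_nonneg' {q μ η : ℝ} (hq : 0 < q) (hq' : q < 1) (hμ : 0 < μ) (k : ℕ) :
    0 ≤ qPoch q (q ^ μ) k / qPoch q q k * q ^ ((k : ℝ) * (η + 1)) := by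
  have h1 : 0 < qPoch q (q ^ μ) k :=
    qPoch_pos' hq.le hq'.le (Real.rpow_nonneg hq.le μ) (Real.rpow_lt_one hq.le hq' hμ) k
  have h2 : 0 < qPoch q q k := qPoch_pos' hq.le hq'.le hq.le hq' k
  have h3 : 0 < q ^ ((k : ℝ) * (η + 1)) := Real.rpow_pos_of_pos hq _
  positivity

lemma w_summable' {q μ η : ℝ} (hq : 0 < q) (hq' : q < 1) (hμ : 0 < μ) (hη : -1 < η) :
    Summable (fun k : ℕ => qPoch q (q ^ μ) k / qPoch q q k * q ^ ((k : ℝ) * (η + 1))) := by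
  set W : ℕ → ℝ := fun k : ℕ => qPoch q (q ^ μ) k / qPoch q q k * q ^ ((k : ℝ) * (η + 1)) with hW
  have hden : ∀ k : ℕ, 0 < 1 - q * q ^ k := by
    intro k
    have h1 : q ^ k ≤ 1 := pow_le_one₀ hq.le hq'.le
    nlinarith
  have hstep : ∀ k : ℕ, W (k + 1) = W k * ((1 - q ^ μ * q ^ k) * q ^ (η + 1) / (1 - q * q ^ k)) := by
    intro k
    have hQ : qPoch q q k ≠ 0 := ne_of_gt (qPoch_pos' hq.le hq'.le hq.le hq' k)
    have hd : (1 : ℝ) - q * q ^ k ≠ 0 := ne_of_gt (hden k)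
    have he : q ^ ((((k : ℕ) + 1 : ℕ) : ℝ) * (η + 1)) = q ^ ((k : ℝ) * (η + 1)) * q ^ (η + 1) := by
      rw [← Real.rpow_add hq]
      congr 1
      push_cast
      ring
    simp only [hW, qPoch_succ', he]
    field_simp
  have hqe : 0 < q ^ (η + 1) := Real.rpow_pos_of_pos hq _
  have hqe1 : q ^ (η + 1) < 1 := Real.rpow_lt_one hq.le hq' (by linarith)
  set r : ℝ := (1 + q ^ (η + 1)) / 2 with hr
  have hr1 : r < 1 := by rw [hr]; linarith
  have hε : 0 < r - q ^ (η + 1) := by rw [hr]; linarith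
  have htend : Tendsto (fun k : ℕ => r * q ^ (k + 1)) atTop (nhds 0) := by
    have h0 : Tendsto (fun k : ℕ => q ^ k) atTop (nhds 0) :=
      tendsto_pow_atTop_nhds_zero_of_lt_one hq.le hq'
    have h1 : Tendsto (fun k : ℕ => q ^ (k + 1)) atTop (nhds 0) :=
      h0.comp (tendsto_add_atTop_nat 1)
    simpa using h1.const_mul r
  have hev : ∀ᶠ k in atTop, r * q ^ (k + 1) < r - q ^ (η + 1) :=
    htend.eventually_lt_const hε
  apply summable_of_ratio_norm_eventually_le hr1
  filter_upwards [hev] with k hk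
  have hwk : 0 ≤ W k := w_nonneg' hq hq' hμ k
  have hwk1 : 0 ≤ W (k + 1) := w_nonneg' hq hq' hμ (k + 1)
  rw [Real.norm_eq_abs, Real.norm_eq_abs, abs_of_nonneg hwk1, abs_of_nonneg hwk, hstep k]
  have hA : 0 ≤ q ^ μ * q ^ k :=
    mul_nonneg (Real.rpow_nonneg hq.le μ) (pow_nonneg hq.le k)
  have hk' : r * (q * q ^ k) < r - q ^ (η + 1) := by
    rwa [← pow_succ']
  have hρ : (1 - q ^ μ * q ^ k) * q ^ (η + 1) / (1 - q * q ^ k) ≤ r := by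
    rw [div_le_iff₀ (hden k)]
    nlinarith [mul_nonneg hA hqe.le]
  calc W k * ((1 - q ^ μ * q ^ k) * q ^ (η + 1) / (1 - q * q ^ k))
      ≤ W k * r := mul_le_mul_of_nonneg_left hρ hwk
    _ = r * W k := mul_comm _ _

lemma absmul4 {w x y z a b c d : ℝ} (hw : |w| ≤ a) (hx : |x| ≤ b) (hy : |y| ≤ c) (hz : |z| ≤ d) :
    |w * x * y * z| ≤ a * b * c * d := by
  have ha : 0 ≤ a := (abs_nonneg w).trans hw
  have hb : 0 ≤ b := (abs_nonneg x).trans hx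
  have hc : 0 ≤ c := (abs_nonneg y).trans hy
  calc |w * x * y * z| = |w| * |x| * |y| * |z| := by rw [abs_mul, abs_mul, abs_mul]
    _ ≤ a * b * c * d := by
        apply mul_le_mul _ hz (abs_nonneg z) (by positivity)
        apply mul_le_mul _ hy (abs_nonneg y) (by positivity)
        exact mul_le_mul hw hx (abs_nonneg x) ha

lemma sum_aux {a φ : ℕ → ℝ} {M : ℝ} (ha : ∀ k, 0 ≤ a k) (hsa : Summable a)
    (hφ : ∀ k, |φ k| ≤ M) : Summable fun k => a k * φ k := by
  apply Summable.of_abs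
  apply Summable.of_nonneg_of_le (fun k => abs_nonneg _) (fun k => ?_) (hsa.mul_right M)
  rw [abs_mul, abs_of_nonneg (ha k)]
  exact mul_le_mul_of_nonneg_left (hφ k) (ha k)

lemma pair_summable {c d : ℕ → ℝ} (hc : Summable c) (hd : Summable d) :
    Summable fun p : ℕ × ℕ => c p.1 * d p.2 := by
  apply Summable.of_abs
  have := hc.abs.mul_of_nonneg hd.abs (fun k => abs_nonneg _) (fun m => abs_nonneg _)
  simpa [abs_mul] using this

lemma prod_tsum {c d : ℕ → ℝ} (hc : Summable c) (hd : Summable d) :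
    (∑' k, c k) * (∑' m, d m) = ∑' p : ℕ × ℕ, c p.1 * d p.2 :=
  Summable.tsum_mul_tsum hc hd (pair_summable hc hd)

lemma core (a b F G H U F' G' H' U' : ℕ → ℝ)
    (ha : ∀ k, 0 ≤ a k) (hb : ∀ m, 0 ≤ b m)
    (hsa : Summable a) (hsb : Summable b)
    {MF MG MH MU MF' MG' MH' MU' : ℝ}
    (hMF : ∀ k, |F k| ≤ MF) (hMG : ∀ k, |G k| ≤ MG)
    (hMH : ∀ k, |H k| ≤ MH) (hMU : ∀ k, |U k| ≤ MU)
    (hMF' : ∀ m, |F' m| ≤ MF') (hMG' : ∀ m, |G' m| ≤ MG')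
    (hMH' : ∀ m, |H' m| ≤ MH') (hMU' : ∀ m, |U' m| ≤ MU')
    (hU : ∀ k, 0 ≤ U k) (hU' : ∀ m, 0 ≤ U' m)
    (hH : ∀ k, 0 ≤ H k) (hH' : ∀ m, 0 ≤ H' m)
    (hasync : ∀ k m, (F k - F' m) * (G k - G' m) ≤ 0) :
    (∑' k, a k * (U k * F k * G k * H k)) * (∑' m, b m * U' m) +
      (∑' k, a k * (U k * F k * G k)) * (∑' m, b m * (U' m * H' m)) +
      (∑' k, a k * (U k * H k)) * (∑' m, b m * (U' m * F' m * G' m)) +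
      (∑' k, a k * U k) * (∑' m, b m * (U' m * F' m * G' m * H' m))
      ≤
    (∑' k, a k * (U k * G k * H k)) * (∑' m, b m * (U' m * F' m)) +
      (∑' k, a k * (U k * F k * H k)) * (∑' m, b m * (U' m * G' m)) +
      (∑' k, a k * (U k * F k)) * (∑' m, b m * (U' m * G' m * H' m)) +
      (∑' k, a k * (U k * G k)) * (∑' m, b m * (U' m * F' m * H' m)) := by
  have one : |(1 : ℝ)| ≤ 1 := by simp
  have sUFGH : Summable fun k => a k * (U k * F k * G k * H k) :=
    sum_aux ha hsa (fun k => absmul4 (hMU k) (hMF k) (hMG k) (hMH k))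
  have sUFG : Summable fun k => a k * (U k * F k * G k) :=
    sum_aux ha hsa (fun k => by simpa using absmul4 (hMU k) (hMF k) (hMG k) one)
  have sUH : Summable fun k => a k * (U k * H k) :=
    sum_aux ha hsa (fun k => by simpa using absmul4 (hMU k) (hMH k) one one)
  have sU : Summable fun k => a k * U k := sum_aux ha hsa hMU
  have sUGH : Summable fun k => a k * (U k * G k * H k) :=
    sum_aux ha hsa (fun k => by simpa using absmul4 (hMU k) (hMG k) (hMH k) one)
  have sUFH : Summable fun k => a k * (U k * F k * H k) :=
    sum_aux ha hsa (fun k => by simpa using absmul4 (hMU k) (hMF k) (hMH k) one)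
  have sUF : Summable fun k => a k * (U k * F k) :=
    sum_aux ha hsa (fun k => by simpa using absmul4 (hMU k) (hMF k) one one)
  have sUG : Summable fun k => a k * (U k * G k) :=
    sum_aux ha hsa (fun k => by simpa using absmul4 (hMU k) (hMG k) one one)
  have tUFGH : Summable fun m => b m * (U' m * F' m * G' m * H' m) :=
    sum_aux hb hsb (fun m => absmul4 (hMU' m) (hMF' m) (hMG' m) (hMH' m))
  have tUFG : Summable fun m => b m * (U' m * F' m * G' m) :=
    sum_aux hb hsb (fun m => by simpa using absmul4 (hMU' m) (hMF' m) (hMG' m) one)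
  have tUH : Summable fun m => b m * (U' m * H' m) :=
    sum_aux hb hsb (fun m => by simpa using absmul4 (hMU' m) (hMH' m) one one)
  have tU : Summable fun m => b m * U' m := sum_aux hb hsb hMU'
  have tUGH : Summable fun m => b m * (U' m * G' m * H' m) :=
    sum_aux hb hsb (fun m => by simpa using absmul4 (hMU' m) (hMG' m) (hMH' m) one)
  have tUFH : Summable fun m => b m * (U' m * F' m * H' m) :=
    sum_aux hb hsb (fun m => by simpa using absmul4 (hMU' m) (hMF' m) (hMH' m) one)
  have tUF : Summable fun m => b m * (U' m * F' m) :=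
    sum_aux hb hsb (fun m => by simpa using absmul4 (hMU' m) (hMF' m) one one)
  have tUG : Summable fun m => b m * (U' m * G' m) :=
    sum_aux hb hsb (fun m => by simpa using absmul4 (hMU' m) (hMG' m) one one)
  rw [prod_tsum sUFGH tU, prod_tsum sUFG tUH, prod_tsum sUH tUFG, prod_tsum sU tUFGH,
    prod_tsum sUGH tUF, prod_tsum sUFH tUG, prod_tsum sUF tUGH, prod_tsum sUG tUFH]
  have pL1 := pair_summable sUFGH tU
  have pL2 := pair_summable sUFG tUH
  have pL3 := pair_summable sUH tUFG
  have pL4 := pair_summable sU tUFGH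
  have pR1 := pair_summable sUGH tUF
  have pR2 := pair_summable sUFH tUG
  have pR3 := pair_summable sUF tUGH
  have pR4 := pair_summable sUG tUFH
  rw [← Summable.tsum_add pL1 pL2, ← Summable.tsum_add (pL1.add pL2) pL3, ← Summable.tsum_add ((pL1.add pL2).add pL3) pL4,
    ← Summable.tsum_add pR1 pR2, ← Summable.tsum_add (pR1.add pR2) pR3, ← Summable.tsum_add ((pR1.add pR2).add pR3) pR4]
  apply Summable.tsum_le_tsum _ (((pL1.add pL2).add pL3).add pL4) (((pR1.add pR2).add pR3).add pR4)
  rintro ⟨k, m⟩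
  have h1 : 0 ≤ a k * b m * (U k * U' m) * (H k + H' m) :=
    mul_nonneg (mul_nonneg (mul_nonneg (ha k) (hb m)) (mul_nonneg (hU k) (hU' m)))
      (add_nonneg (hH k) (hH' m))
  have h2 : a k * b m * (U k * U' m) * (H k + H' m) * ((F k - F' m) * (G k - G' m)) ≤ 0 :=
    mul_nonpos_iff.mpr (Or.inl ⟨h1, hasync k m⟩)
  nlinarith [h2]

theorem thm2
    (q₁ q₂ β δ μ ν η ζ : ℝ)
    (hq₁ : 0 < q₁) (hq₁' : q₁ < 1) (hq₂ : 0 < q₂) (hq₂' : q₂ < 1)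
    (hβ : 0 < β) (hδ : 0 < δ) (hμ : 0 < μ) (hν : 0 < ν)
    (hη : -1 < η) (hζ : -1 < ζ)
    (f g h u : ℝ → ℝ)
    (hcf : ContinuousOn f (Set.Ici 0))
    (hcg : ContinuousOn g (Set.Ici 0))
    (hch : ContinuousOn h (Set.Ici 0))
    (hcu : ContinuousOn u (Set.Ici 0))
    (hfg : Asynchronous f g)
    (hh0 : ∀ x : ℝ, 0 ≤ x → 0 ≤ h x)
    (hu0 : ∀ x : ℝ, 0 ≤ x → 0 ≤ u x)
    (t : ℝ) (ht : 0 < t) :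
    EK q₂ ζ ν δ (fun s => u s * f s * g s * h s) t * EK q₁ η μ β u t +
      EK q₂ ζ ν δ (fun s => u s * f s * g s) t * EK q₁ η μ β (fun s => u s * h s) t +
      EK q₂ ζ ν δ (fun s => u s * h s) t * EK q₁ η μ β (fun s => u s * f s * g s) t +
      EK q₂ ζ ν δ u t * EK q₁ η μ β (fun s => u s * f s * g s * h s) t
      ≤
      EK q₂ ζ ν δ (fun s => u s * g s * h s) t * EK q₁ η μ β (fun s => u s * f s) t +
      EK q₂ ζ ν δ (fun s => u s * f s * h s) t * EK q₁ η μ β (fun s => u s * g s) t +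
      EK q₂ ζ ν δ (fun s => u s * f s) t * EK q₁ η μ β (fun s => u s * g s * h s) t +
      EK q₂ ζ ν δ (fun s => u s * g s) t * EK q₁ η μ β (fun s => u s * f s * h s) t := by
  -- the evaluation points
  have hX₂ : ∀ k : ℕ, t * q₂ ^ ((k : ℝ) / δ) ∈ Set.Icc (0 : ℝ) t := by
    intro k
    constructor
    · positivity
    · exact mul_le_of_le_one_right ht.le
        (Real.rpow_le_one hq₂.le hq₂'.le (by positivity))
  have hX₁ : ∀ m : ℕ, t * q₁ ^ ((m : ℝ) / β) ∈ Set.Icc (0 : ℝ) t := by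
    intro m
    constructor
    · positivity
    · exact mul_le_of_le_one_right ht.le
        (Real.rpow_le_one hq₁.le hq₁'.le (by positivity))
  have hsub : Set.Icc (0 : ℝ) t ⊆ Set.Ici 0 := fun x hx => hx.1
  obtain ⟨Mf, hMf⟩ := isCompact_Icc.exists_bound_of_continuousOn (hcf.mono hsub)
  obtain ⟨Mg, hMg⟩ := isCompact_Icc.exists_bound_of_continuousOn (hcg.mono hsub)
  obtain ⟨Mh, hMh⟩ := isCompact_Icc.exists_bound_of_continuousOn (hch.mono hsub)
  obtain ⟨Mu, hMu⟩ := isCompact_Icc.exists_bound_of_continuousOn (hcu.mono hsub)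
  simp only [Real.norm_eq_abs] at hMf hMg hMh hMu
  have hcore :=
    core (fun k : ℕ => qPoch q₂ (q₂ ^ ν) k / qPoch q₂ q₂ k * q₂ ^ ((k : ℝ) * (ζ + 1)))
      (fun m : ℕ => qPoch q₁ (q₁ ^ μ) m / qPoch q₁ q₁ m * q₁ ^ ((m : ℝ) * (η + 1)))
      (fun k : ℕ => f (t * q₂ ^ ((k : ℝ) / δ)))
      (fun k : ℕ => g (t * q₂ ^ ((k : ℝ) / δ)))
      (fun k : ℕ => h (t * q₂ ^ ((k : ℝ) / δ)))
      (fun k : ℕ => u (t * q₂ ^ ((k : ℝ) / δ)))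
      (fun m : ℕ => f (t * q₁ ^ ((m : ℝ) / β)))
      (fun m : ℕ => g (t * q₁ ^ ((m : ℝ) / β)))
      (fun m : ℕ => h (t * q₁ ^ ((m : ℝ) / β)))
      (fun m : ℕ => u (t * q₁ ^ ((m : ℝ) / β)))
      (fun k => w_nonneg' hq₂ hq₂' hν k)
      (fun m => w_nonneg' hq₁ hq₁' hμ m)
      (w_summable' hq₂ hq₂' hν hζ)
      (w_summable' hq₁ hq₁' hμ hη)
      (fun k => hMf _ (hX₂ k)) (fun k => hMg _ (hX₂ k))
      (fun k => hMh _ (hX₂ k)) (fun k => hMu _ (hX₂ k))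
      (fun m => hMf _ (hX₁ m)) (fun m => hMg _ (hX₁ m))
      (fun m => hMh _ (hX₁ m)) (fun m => hMu _ (hX₁ m))
      (fun k => hu0 _ (hX₂ k).1) (fun m => hu0 _ (hX₁ m).1)
      (fun k => hh0 _ (hX₂ k).1) (fun m => hh0 _ (hX₁ m).1)
      (fun k m => hfg _ _ (hX₂ k).1 (hX₁ m).1)
  have hC₂ : 0 < δ * (1 - q₂ ^ (1 / δ)) * (1 - q₂) ^ (ν - 1) := by
    have h1 : q₂ ^ (1 / δ) < 1 := Real.rpow_lt_one hq₂.le hq₂' (by positivity)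
    have h2 : (0 : ℝ) < (1 - q₂) ^ (ν - 1) := Real.rpow_pos_of_pos (by linarith) _
    have h3 : (0 : ℝ) < 1 - q₂ ^ (1 / δ) := by linarith
    positivity
  have hC₁ : 0 < β * (1 - q₁ ^ (1 / β)) * (1 - q₁) ^ (μ - 1) := by
    have h1 : q₁ ^ (1 / β) < 1 := Real.rpow_lt_one hq₁.le hq₁' (by positivity)
    have h2 : (0 : ℝ) < (1 - q₁) ^ (μ - 1) := Real.rpow_pos_of_pos (by linarith) _
    have h3 : (0 : ℝ) < 1 - q₁ ^ (1 / β) := by linarith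
    positivity
  have hmul := mul_le_mul_of_nonneg_left hcore
    (mul_nonneg hC₂.le hC₁.le)
  simp only [EK]
  nlinarith [hmul]
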